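/- Define ψ^{(-k)}(q) = (1/k!)[k ζ'(1-k,q) - H_{k-1} B_k(q)]. Then for k ≥ 1 and q > 0, ψ^{(-k)}(q+1) = ψ^{(-k)}(q) + (q^{k-1}/(k-1)!)(ln q - H_{k-1}). -/

import Mathlib

/-!
For `re z > 1` peeling off the first term of the series gives `ζ(z, q) = ζ(z, q + 1) + q^(-z)`.
Both sides are analytic on the connected set `ℂ ∖ {1}`, so the identity persists there;
differentiating at `z = 1 - k` gives `ζ'(1 - k, q) = ζ'(1 - k, q + 1) - q^(k-1) log q`, and
`B_k(q + 1) = B_k(q) + k q^(k-1)` accounts for the harmonic-number term.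
-/

open Complex

/-- The `k`-th Bernoulli polynomial, evaluated at a real number. -/
noncomputable def bernoulliPoly (k : ℕ) (x : ℝ) : ℝ :=
  Polynomial.eval x ((Polynomial.bernoulli k).map (algebraMap ℚ ℝ))

/-- The `r`-th harmonic number, `H_0 = 0`. -/
noncomputable def harmonicNum (r : ℕ) : ℝ := ∑ i ∈ Finset.range r, (1 : ℝ) / (i + 1)

/-- The balanced negapolygamma `ψ^{(-k)}(q) = (1/k!)[k ζ'(1-k,q) - H_{k-1} B_k(q)]`,
defined via (any) analytic continuation `F` of the Hurwitz zeta function. -/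
noncomputable def balancedNegapolygamma (F : ℂ → ℝ → ℂ) (k : ℕ) (q : ℝ) : ℂ :=
  (1 / (k.factorial : ℂ)) *
    ((k : ℂ) * deriv (fun z => F z q) (1 - k) -
      (harmonicNum (k - 1) : ℂ) * (bernoulliPoly k q : ℂ))

lemma bernoulliPoly_add_one (k : ℕ) (x : ℝ) :
    bernoulliPoly k (x + 1) = bernoulliPoly k x + k * x ^ (k - 1) := by
  have hcomp : (Polynomial.bernoulli k).comp (1 + Polynomial.X) =
      Polynomial.bernoulli k + Polynomial.C (k : ℚ) * Polynomial.X ^ (k - 1) := by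
    refine Polynomial.funext fun y => ?_
    simp [Polynomial.bernoulli_eval_one_add]
  have := congrArg (fun p => Polynomial.eval x (p.map (algebraMap ℚ ℝ))) hcomp
  simpa [bernoulliPoly, Polynomial.map_comp, add_comm] using this

lemma summable_one_div_nat_add_cpow {q : ℝ} (hq : 0 < q) {z : ℂ} (hz : 1 < z.re) :
    Summable fun n : ℕ => 1 / ((n : ℂ) + q) ^ z := by
  refine .of_norm ?_
  convert (Real.summable_one_div_nat_add_rpow q z.re).mpr hz using 2 with n
  have hpos : 0 < (n : ℝ) + q := by positivity
  rw [norm_div, norm_one, ← ofReal_natCast, ← ofReal_add, norm_cpow_eq_rpow_re_of_pos hpos,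
    abs_of_pos hpos]

lemma tsum_one_div_nat_add_cpow_eq_add_cpow_neg {q : ℝ} (hq : 0 < q) {z : ℂ} (hz : 1 < z.re) :
    ∑' n : ℕ, 1 / ((n : ℂ) + q) ^ z =
      ∑' n : ℕ, 1 / ((n : ℂ) + ↑(q + 1)) ^ z + (q : ℂ) ^ (-z) := by
  rw [(summable_one_div_nat_add_cpow hq hz).tsum_eq_zero_add, add_comm, cpow_neg]
  push_cast
  simp [add_assoc, add_comm (1 : ℂ)]

lemma eqOn_add_cpow_neg_of_eq_tsum (F : ℂ → ℝ → ℂ)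
    (hF : ∀ q : ℝ, 0 < q → AnalyticOn ℂ (fun z => F z q) {(1 : ℂ)}ᶜ)
    (hFeq : ∀ z : ℂ, 1 < z.re → ∀ q : ℝ, 0 < q →
      F z q = ∑' n : ℕ, 1 / ((n : ℂ) + (q : ℂ)) ^ z)
    {q : ℝ} (hq : 0 < q) :
    Set.EqOn (fun z => F z q) (fun z => F z (q + 1) + (q : ℂ) ^ (-z)) {(1 : ℂ)}ᶜ := by
  have hq1 : 0 < q + 1 := by linarith
  have hopen : IsOpen ({(1 : ℂ)}ᶜ : Set ℂ) := isOpen_compl_singleton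
  have hleft : AnalyticOnNhd ℂ (fun z => F z q) {(1 : ℂ)}ᶜ :=
    hopen.analyticOn_iff_analyticOnNhd.mp (hF q hq)
  have hright : AnalyticOnNhd ℂ (fun z => F z (q + 1) + (q : ℂ) ^ (-z)) {(1 : ℂ)}ᶜ := by
    refine (hopen.analyticOn_iff_analyticOnNhd.mp (hF (q + 1) hq1)).add ?_
    exact (differentiable_neg.const_cpow (Or.inl (ofReal_ne_zero.mpr hq.ne'))).differentiableOn
      |>.analyticOnNhd hopen
  have hconnected : IsPreconnected ({(1 : ℂ)}ᶜ : Set ℂ) :=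
    (isConnected_compl_singleton_of_one_lt_rank
      (by rw [rank_real_complex]; exact Cardinal.one_lt_two) 1).isPreconnected
  have hnear_two : (fun z => F z q) =ᶠ[nhds 2] (fun z => F z (q + 1) + (q : ℂ) ^ (-z)) := by
    filter_upwards [(isOpen_lt continuous_const continuous_re).mem_nhds
      (show (1 : ℝ) < (2 : ℂ).re by norm_num)] with z hz
    rw [hFeq z hz q hq, hFeq z hz (q + 1) hq1, tsum_one_div_nat_add_cpow_eq_add_cpow_neg hq hz]
  exact hleft.eqOn_of_preconnected_of_eventuallyEq hright hconnected (by norm_num) hnear_two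

lemma deriv_eq_deriv_add_one_sub_of_eq_tsum (F : ℂ → ℝ → ℂ)
    (hF : ∀ q : ℝ, 0 < q → AnalyticOn ℂ (fun z => F z q) {(1 : ℂ)}ᶜ)
    (hFeq : ∀ z : ℂ, 1 < z.re → ∀ q : ℝ, 0 < q →
      F z q = ∑' n : ℕ, 1 / ((n : ℂ) + (q : ℂ)) ^ z)
    {q : ℝ} (hq : 0 < q) {z : ℂ} (hz : z ≠ 1) :
    deriv (fun w => F w q) z = deriv (fun w => F w (q + 1)) z - (q : ℂ) ^ (-z) * log q := by
  have hnhds : ({(1 : ℂ)}ᶜ : Set ℂ) ∈ nhds z := isOpen_compl_singleton.mem_nhds hz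
  have hF1 : DifferentiableAt ℂ (fun w => F w (q + 1)) z :=
    (hF (q + 1) (by linarith)).differentiableOn.differentiableAt hnhds
  have hpow : HasDerivAt (fun w : ℂ => (q : ℂ) ^ (-w)) ((q : ℂ) ^ (-z) * log q * (-1)) z :=
    (hasDerivAt_neg z).const_cpow (Or.inl (ofReal_ne_zero.mpr hq.ne'))
  rw [((eqOn_add_cpow_neg_of_eq_tsum F hF hFeq hq).eventuallyEq_of_mem hnhds).deriv_eq,
    deriv_fun_add hF1 hpow.differentiableAt, hpow.deriv]
  ring

/-- For `k ≥ 1` and `q > 0`,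
`ψ^{(-k)}(q+1) = ψ^{(-k)}(q) + (q^{k-1}/(k-1)!)(ln q - H_{k-1})`. -/
theorem balancedNegapolygamma_shift (F : ℂ → ℝ → ℂ)
    (hF : ∀ q : ℝ, 0 < q → AnalyticOn ℂ (fun z => F z q) {(1 : ℂ)}ᶜ)
    (hFeq : ∀ z : ℂ, 1 < z.re → ∀ q : ℝ, 0 < q →
      F z q = ∑' n : ℕ, 1 / ((n : ℂ) + (q : ℂ)) ^ z)
    (k : ℕ) (hk : 1 ≤ k) (q : ℝ) (hq : 0 < q) :
    balancedNegapolygamma F k (q + 1) =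
      balancedNegapolygamma F k q +
        ((q : ℂ) ^ (k - 1) / ((k - 1).factorial : ℂ)) *
          ((Real.log q : ℂ) - (harmonicNum (k - 1) : ℂ)) := by
  have hk0 : (k : ℂ) ≠ 0 := Nat.cast_ne_zero.mpr (by omega)
  have hk1 : (1 - k : ℂ) ≠ 1 := by simpa [sub_eq_self] using hk0
  have hpow : (q : ℂ) ^ (-(1 - k : ℂ)) = (q : ℂ) ^ (k - 1) := by
    rw [neg_sub, ← cpow_natCast, Nat.cast_sub hk, Nat.cast_one]
  have hfac : (k.factorial : ℂ) = k * (k - 1).factorial := by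
    rw [← Nat.cast_mul, Nat.mul_factorial_pred (by omega)]
  have hfac_ne : ((k - 1).factorial : ℂ) ≠ 0 := Nat.cast_ne_zero.mpr (Nat.factorial_ne_zero _)
  unfold balancedNegapolygamma
  rw [deriv_eq_deriv_add_one_sub_of_eq_tsum F hF hFeq hq hk1, hpow, bernoulliPoly_add_one,
    ← ofReal_log hq.le, hfac]
  push_cast
  field_simp
  ring
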